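/- arXiv:0910.0155 — 5 statements merged into one kernel-verified Lean document; each statement's English description precedes it below -/
import Mathlib

section
/- If P and Q are bounded idempotent operators on a Hilbert space with ‖P − Q‖ < 1, then P and Q have the same rank (their ranges have equal, possibly infinite, dimension). -/
/-!
`Q` is injective on the range of `P`: a fixed point `x` of `P` with `Q x = 0` satisfies
`‖x‖ = ‖(P - Q) x‖ ≤ ‖P - Q‖ ‖x‖`, forcing `x = 0`. Hence `rank P ≤ rank Q`, and the
hypotheses are symmetric in `P` and `Q`.
-/

namespace ContinuousLinearMap

variable {𝕜 E : Type*} [NontriviallyNormedField 𝕜] [NormedAddCommGroup E] [NormedSpace 𝕜 E]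
  {P Q : E →L[𝕜] E}

theorem ker_domRestrict_range_eq_bot_of_norm_sub_lt_one (hP : IsIdempotentElem P)
    (hnorm : ‖P - Q‖ < 1) :
    LinearMap.ker ((Q : E →ₗ[𝕜] E).domRestrict (LinearMap.range (P : E →ₗ[𝕜] E))) = ⊥ := by
  refine LinearMap.ker_eq_bot'.mpr fun ⟨x, hx⟩ hQx => Subtype.ext ?_
  replace hQx : Q x = 0 := hQx
  have hPx : P x = x :=
    (LinearMap.IsIdempotentElem.mem_range_iff (IsIdempotentElem.toLinearMap hP)).mp hx
  have hle : ‖x‖ ≤ ‖P - Q‖ * ‖x‖ :=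
    calc ‖x‖ = ‖(P - Q) x‖ := by rw [sub_apply, hPx, hQx, sub_zero]
      _ ≤ ‖P - Q‖ * ‖x‖ := (P - Q).le_opNorm x
  exact norm_le_zero_iff.mp (by nlinarith [norm_nonneg x])

theorem rank_range_le_of_norm_sub_lt_one (hP : IsIdempotentElem P) (hnorm : ‖P - Q‖ < 1) :
    Module.rank 𝕜 (LinearMap.range (P : E →ₗ[𝕜] E)) ≤
      Module.rank 𝕜 (LinearMap.range (Q : E →ₗ[𝕜] E)) := by
  set R := LinearMap.range (P : E →ₗ[𝕜] E)
  have hinj : Function.Injective ((Q : E →ₗ[𝕜] E).domRestrict R) :=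
    LinearMap.ker_eq_bot.mp (ker_domRestrict_range_eq_bot_of_norm_sub_lt_one hP hnorm)
  calc Module.rank 𝕜 R = Module.rank 𝕜 (LinearMap.range ((Q : E →ₗ[𝕜] E).domRestrict R)) :=
        (rank_range_of_injective _ hinj).symm
    _ ≤ Module.rank 𝕜 (LinearMap.range (Q : E →ₗ[𝕜] E)) :=
        Submodule.rank_mono (LinearMap.range_domRestrict_le_range _ _)

end ContinuousLinearMap

theorem stmt3_general {H : Type*} [NormedAddCommGroup H] [InnerProductSpace ℂ H]
    (P Q : H →L[ℂ] H) (hP : P.comp P = P) (hQ : Q.comp Q = Q)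
    (hnorm : ‖P - Q‖ < 1) :
    Module.rank ℂ (LinearMap.range (P : H →ₗ[ℂ] H)) =
      Module.rank ℂ (LinearMap.range (Q : H →ₗ[ℂ] H)) :=
  le_antisymm (P.rank_range_le_of_norm_sub_lt_one hP hnorm)
    (Q.rank_range_le_of_norm_sub_lt_one hQ (by rwa [norm_sub_rev]))

/-- Two bounded idempotent operators on a Hilbert space at operator-norm distance
less than `1` have ranges of the same (possibly infinite) dimension. -/
theorem stmt3 {H : Type*} [NormedAddCommGroup H] [InnerProductSpace ℂ H] [CompleteSpace H]
    (P Q : H →L[ℂ] H) (hP : P.comp P = P) (hQ : Q.comp Q = Q)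
    (hnorm : ‖P - Q‖ < 1) :
    Module.rank ℂ (LinearMap.range (P : H →ₗ[ℂ] H)) =
      Module.rank ℂ (LinearMap.range (Q : H →ₗ[ℂ] H)) :=
  stmt3_general P Q hP hQ hnorm
end

section
/- With λ_n(t) = 2^{−n²} √(1 + (t/s_n)²) and s_n = 2^{n−n²}, for every α > 0 the Hölder difference quotients (λ_n'(s_n) − λ_n'(0)) / s_n^α = 2^{n²−2n} s_n^{1−α} / √2 = 2^{n(α(n−1)−1)} / √2 tend to +∞ as n → ∞. -/
/-! λ_n has the shape t ↦ c √(1 + (t/s)²), whose derivative c t / (s² √(1 + (t/s)²)) increases by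
c / (s √2) from t = 0 to t = s. With c = 2^{-n²} and s = s_n = 2^{n-n²}, dividing by s^α leaves
2^{αn² - (α+1)n} / √2, a power of 2 whose exponent grows quadratically in n once α > 0. -/

open Filter

noncomputable def sSeq (n : ℕ) : ℝ := (2 : ℝ) ^ ((n : ℤ) - (n : ℤ) ^ 2)

noncomputable def lamSeq (n : ℕ) (t : ℝ) : ℝ :=
  (2 : ℝ) ^ (-(n : ℤ) ^ 2) * Real.sqrt (1 + (t / sSeq n) ^ 2)

lemma hasDerivAt_const_mul_sqrt_one_add_div_sq (c s t : ℝ) :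
    HasDerivAt (fun t => c * √(1 + (t / s) ^ 2)) (c * (t / s ^ 2 / √(1 + (t / s) ^ 2))) t := by
  have hinner : HasDerivAt (fun t => 1 + (t / s) ^ 2) (2 * (t / s) ^ 1 * (1 / s)) t :=
    (((hasDerivAt_id t).div_const s).pow 2).const_add 1
  have hsqrt_ne : √(1 + (t / s) ^ 2) ≠ 0 := by positivity
  refine ((hinner.sqrt (by positivity)).const_mul c).congr_deriv ?_
  field_simp

lemma deriv_const_mul_sqrt_one_add_div_sq_sub {c s : ℝ} (hs : s ≠ 0) :
    deriv (fun t => c * √(1 + (t / s) ^ 2)) s - deriv (fun t => c * √(1 + (t / s) ^ 2)) 0 =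
      c / (s * √2) := by
  rw [(hasDerivAt_const_mul_sqrt_one_add_div_sq c s s).deriv,
    (hasDerivAt_const_mul_sqrt_one_add_div_sq c s 0).deriv, div_self hs]
  simp only [one_pow, one_add_one_eq_two, zero_div, mul_zero, sub_zero]
  field_simp

lemma sSeq_eq_rpow (n : ℕ) : sSeq n = (2 : ℝ) ^ ((n : ℝ) - (n : ℝ) ^ 2) := by
  rw [sSeq, ← Real.rpow_intCast]
  push_cast
  rfl

lemma holder_quotient_eq (α : ℝ) (n : ℕ) :
    (deriv (lamSeq n) (sSeq n) - deriv (lamSeq n) 0) / (sSeq n) ^ α =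
      (2 : ℝ) ^ ((n : ℝ) * (α * ((n : ℝ) - 1) - 1)) / Real.sqrt 2 := by
  have hs : sSeq n ≠ 0 := (zpow_pos two_pos _).ne'
  rw [show lamSeq n = fun t => (2 : ℝ) ^ (-(n : ℤ) ^ 2) * √(1 + (t / sSeq n) ^ 2) from rfl,
    deriv_const_mul_sqrt_one_add_div_sq_sub hs]
  have hexp : (n : ℝ) * (α * ((n : ℝ) - 1) - 1) =
      -(n : ℝ) ^ 2 - ((n : ℝ) - (n : ℝ) ^ 2) - ((n : ℝ) - (n : ℝ) ^ 2) * α := by ring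
  rw [hexp, Real.rpow_sub two_pos, Real.rpow_sub two_pos, Real.rpow_mul zero_le_two,
    ← sSeq_eq_rpow, ← Real.rpow_intCast]
  push_cast
  field_simp

lemma tendsto_holder_exponent {α : ℝ} (hα : 0 < α) :
    Tendsto (fun n : ℕ => (n : ℝ) * (α * ((n : ℝ) - 1) - 1)) atTop atTop := by
  have hlin : Tendsto (fun n : ℕ => α * ((n : ℝ) - 1) - 1) atTop atTop := by
    simp only [mul_sub, sub_sub]
    exact tendsto_atTop_add_const_right _ _ (tendsto_natCast_atTop_atTop.const_mul_atTop hα)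
  exact tendsto_natCast_atTop_atTop.atTop_mul_atTop₀ hlin

/-- For every `α > 0`, the Hölder difference quotients
`(λ_n'(s_n) - λ_n'(0)) / s_n^α = 2^{n²-2n} s_n^{1-α}/√2 = 2^{n(α(n-1)-1)}/√2`
of the derivatives of the eigenvalues tend to `+∞`. -/
theorem stmt7 (α : ℝ) (hα : 0 < α) :
    (∀ n : ℕ, (deriv (lamSeq n) (sSeq n) - deriv (lamSeq n) 0) / (sSeq n) ^ α =
      (2 : ℝ) ^ ((n : ℝ) * (α * ((n : ℝ) - 1) - 1)) / Real.sqrt 2) ∧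
    Tendsto (fun n : ℕ => (deriv (lamSeq n) (sSeq n) - deriv (lamSeq n) 0) / (sSeq n) ^ α)
      atTop atTop := by
  refine ⟨holder_quotient_eq α, ?_⟩
  simp only [holder_quotient_eq]
  exact ((tendsto_rpow_atTop_of_base_gt_one 2 one_lt_two).comp
    (tendsto_holder_exponent hα)).atTop_div_const (by positivity)
end

section
/- Let γ be a simple closed C¹ curve in ℂ contained in the resolvent set of a normal operator A with compact resolvent, enclosing exactly the eigenvalue z₀ of A among its eigenvalues. Then P = −(2πi)⁻¹ ∮_γ (A − z)⁻¹ dz is a projection onto the eigenspace of A for the eigenvalue z₀, and its rank equals the multiplicity of z₀. -/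
/-!
On an eigenvector `v` of `A` with eigenvalue `w` the resolvent acts as `(w - z)⁻¹`, so `P (ι v)` is
the winding number of `γ` around `w` times `ι v`: `P` fixes the `z₀`-eigenspace and kills the other
eigenspaces. Since `z₀` is real and `γ` winds around it, `γ` meets the real axis at some `z`
(otherwise `log (γ - z₀)` would be a primitive along `γ`). There `ι ∘ (A - z)⁻¹` is a compact
self-adjoint operator whose eigenvectors are images of eigenvectors of `A`; they span a dense
subspace, so by continuity `P` maps `H` into the finite-dimensional, hence closed,
`z₀`-eigenspace.
-/

open scoped InnerProductSpace
open Module End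

noncomputable def windingNumber (γ : ℝ → ℂ) (w : ℂ) : ℂ :=
  (2 * Real.pi * Complex.I)⁻¹ * ∫ t in (0:ℝ)..1, deriv γ t / (γ t - w)

theorem windingNumber_eq_zero_of_mem_slitPlane {γ : ℝ → ℂ} (hγ : ContDiff ℝ 1 γ)
    (hclosed : γ 0 = γ 1) {w : ℂ} (hslit : ∀ t ∈ Set.Icc (0:ℝ) 1, γ t - w ∈ Complex.slitPlane) :
    windingNumber γ w = 0 := by
  rw [← Set.uIcc_of_le zero_le_one] at hslit
  have hderiv : ∀ t ∈ Set.uIcc (0:ℝ) 1,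
      HasDerivAt (fun s ↦ Complex.log (γ s - w)) (deriv γ t / (γ t - w)) t := fun t ht ↦
    (((hγ.differentiable one_ne_zero) t).hasDerivAt.sub_const w).clog_real (hslit t ht)
  have hint : IntervalIntegrable (fun t ↦ deriv γ t / (γ t - w)) MeasureTheory.volume 0 1 :=
    ((hγ.continuous_deriv le_rfl).continuousOn.div (hγ.continuous.sub continuous_const).continuousOn
      fun t ht ↦ Complex.slitPlane_ne_zero (hslit t ht)).intervalIntegrable
  rw [windingNumber, intervalIntegral.integral_eq_sub_of_hasDerivAt hderiv hint, hclosed,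
    sub_self, mul_zero]

theorem exists_im_eq_of_windingNumber_ne_zero {γ : ℝ → ℂ} (hγ : ContDiff ℝ 1 γ)
    (hclosed : γ 0 = γ 1) {w : ℂ} (hw : windingNumber γ w ≠ 0) :
    ∃ t ∈ Set.Icc (0:ℝ) 1, (γ t).im = w.im := by
  by_contra! h
  exact hw <| windingNumber_eq_zero_of_mem_slitPlane hγ hclosed fun t ht ↦
    Complex.mem_slitPlane_iff.mpr <| Or.inr <| by simpa [sub_eq_zero] using h t ht

section Pencil

variable {V H : Type*} [NormedAddCommGroup V] [NormedSpace ℂ V]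
  [NormedAddCommGroup H] [InnerProductSpace ℂ H] {ι A : V →L[ℂ] H} {R : H →L[ℂ] V} {z w : ℂ}
  {v : V} {y : H}

def eigenImage (A ι : V →L[ℂ] H) (w : ℂ) : Submodule ℂ H :=
  (LinearMap.ker ((A : V →ₗ[ℂ] H) - w • (ι : V →ₗ[ℂ] H))).map (ι : V →ₗ[ℂ] H)

theorem mem_eigenImage : y ∈ eigenImage A ι w ↔ ∃ v, A v = w • ι v ∧ ι v = y := by
  simp [eigenImage, sub_eq_zero]

theorem apply_mem_eigenImage (hAv : A v = w • ι v) : ι v ∈ eigenImage A ι w :=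
  mem_eigenImage.mpr ⟨v, hAv, rfl⟩

theorem ne_of_comp_eq_id_of_eigenvector (hR : R.comp (A - z • ι) = .id ℂ V) (hv : v ≠ 0)
    (hAv : A v = w • ι v) : z ≠ w := by
  rintro rfl
  apply hv
  simpa [hAv] using congr($hR v).symm

theorem apply_eigenvector_of_comp_eq_id (hR : R.comp (A - z • ι) = .id ℂ V)
    (hAv : A v = w • ι v) (hzw : z ≠ w) : R (ι v) = (w - z)⁻¹ • v := by
  have hpencil : (A - z • ι) ((w - z)⁻¹ • v) = ι v := by
    rw [map_smul, sub_apply, smul_apply, hAv, ← sub_smul,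
      smul_smul, inv_mul_cancel₀ (sub_ne_zero.mpr hzw.symm), one_smul]
  rw [← hpencil, ← ContinuousLinearMap.comp_apply, hR, ContinuousLinearMap.id_apply]

theorem conj_eigenvalue_eq_self (hsa : ∀ u v : V, ⟪A u, ι v⟫_ℂ = ⟪ι u, A v⟫_ℂ) (hv : ι v ≠ 0)
    (hAv : A v = w • ι v) : (starRingEnd ℂ) w = w := by
  have h := hsa v v
  rw [hAv, inner_smul_left, inner_smul_right] at h
  exact mul_right_cancel₀ (inner_self_ne_zero.mpr hv) h

theorem isSymmetric_comp_of_comp_eq_id (hsa : ∀ u v : V, ⟪A u, ι v⟫_ℂ = ⟪ι u, A v⟫_ℂ)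
    (hR : (A - z • ι).comp R = .id ℂ H) (hz : (starRingEnd ℂ) z = z) :
    (ι.comp R : H →ₗ[ℂ] H).IsSymmetric := by
  intro x y
  change ⟪ι (R x), y⟫_ℂ = ⟪x, ι (R y)⟫_ℂ
  have hx : A (R x) - z • ι (R x) = x := congr($hR x)
  have hy : A (R y) - z • ι (R y) = y := congr($hR y)
  generalize R x = u at hx ⊢
  generalize R y = v at hy ⊢
  subst hx hy
  rw [inner_sub_left, inner_sub_right, inner_smul_left, inner_smul_right, hsa, hz]

theorem exists_eigenvector_of_comp_apply_eq_smul (hι : Function.Injective ι)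
    (hR : (A - z • ι).comp R = .id ℂ H) {x : H} {μ : ℂ} (hx : ι (R x) = μ • x) :
    ∃ (c w : ℂ) (v : V), A v = w • ι v ∧ x = c • ι v := by
  have hxR : A (R x) - z • ι (R x) = x := congr($hR x)
  rcases eq_or_ne μ 0 with rfl | hμ
  · refine ⟨0, 0, 0, by simp, ?_⟩
    rw [zero_smul, ← map_zero ι] at hx
    rw [← hxR, hι hx]
    simp
  · have hxι : x = μ⁻¹ • ι (R x) := by rw [hx, inv_smul_smul₀ hμ]
    refine ⟨μ⁻¹, z + μ⁻¹, R x, ?_, hxι⟩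
    rw [add_smul, ← hxι]
    exact sub_eq_iff_eq_add'.mp hxR

theorem eigenImage_le_eigenspace_comp (hR : R.comp (A - z • ι) = .id ℂ V) (hzw : z ≠ w) :
    eigenImage A ι w ≤ eigenspace (ι.comp R : End ℂ H) (w - z)⁻¹ := by
  intro y hy
  obtain ⟨v, hAv, rfl⟩ := mem_eigenImage.mp hy
  simp [apply_eigenvector_of_comp_eq_id hR hAv hzw]

theorem finiteDimensional_eigenImage [CompleteSpace H] (hT : IsCompactOperator (ι.comp R))
    (hR : R.comp (A - z • ι) = .id ℂ V) (hzw : z ≠ w) :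
    FiniteDimensional ℂ (eigenImage A ι w) :=
  have := ContinuousLinearMap.finite_dimensional_eigenspace hT _
    (inv_ne_zero (sub_ne_zero.mpr hzw.symm))
  Submodule.finiteDimensional_of_le (eigenImage_le_eigenspace_comp hR hzw)

end Pencil

section Resolvent

variable {V H : Type*} [NormedAddCommGroup V] [NormedSpace ℂ V] [CompleteSpace V]
  [NormedAddCommGroup H] [InnerProductSpace ℂ H] {ι A : V →L[ℂ] H}

open ContinuousLinearMap in
theorem continuousOn_of_forall_comp_eq_id {S : Set ℂ} {R : ℂ → H →L[ℂ] V}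
    (hR₁ : ∀ z ∈ S, (A - z • ι).comp (R z) = .id ℂ H)
    (hR₂ : ∀ z ∈ S, (R z).comp (A - z • ι) = .id ℂ V) : ContinuousOn R S := by
  refine ContinuousOn.congr (f := fun z ↦ (A - z • ι).inverse) (fun z hz ↦ ?_)
    fun z hz ↦ (inverse_eq (hR₁ z hz) (hR₂ z hz)).symm
  have hinv := (IsInvertible.of_inverse (hR₁ z hz) (hR₂ z hz)).contDiffAt_map_inverse (n := 0)
  have hpencil : Continuous fun z : ℂ ↦ A - z • ι := by fun_prop
  exact (ContinuousAt.comp (f := fun z ↦ A - z • ι) hinv.continuousAt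
    hpencil.continuousAt).continuousWithinAt

variable [CompleteSpace H] {γ : ℝ → ℂ} {R : ℂ → H →L[ℂ] V} {v : V} {w z₀ : ℂ}

noncomputable def rieszIntegral (ι : V →L[ℂ] H) (R : ℂ → H →L[ℂ] V) (γ : ℝ → ℂ) : H →L[ℂ] H :=
  (-(2 * Real.pi * Complex.I)⁻¹ : ℂ) • ∫ t in (0:ℝ)..1, deriv γ t • (ι.comp (R (γ t)))

theorem rieszIntegral_apply_eigenvector (hγ : ContDiff ℝ 1 γ)
    (hR₁ : ∀ t ∈ Set.Icc (0:ℝ) 1, (A - γ t • ι).comp (R (γ t)) = .id ℂ H)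
    (hR₂ : ∀ t ∈ Set.Icc (0:ℝ) 1, (R (γ t)).comp (A - γ t • ι) = .id ℂ V)
    (hv : v ≠ 0) (hAv : A v = w • ι v) :
    rieszIntegral ι R γ (ι v) = windingNumber γ w • ι v := by
  have hRγ : ContinuousOn (fun t ↦ R (γ t)) (Set.Icc 0 1) :=
    (continuousOn_of_forall_comp_eq_id (S := γ '' Set.Icc 0 1)
      (by rintro _ ⟨t, ht, rfl⟩; exact hR₁ t ht) (by rintro _ ⟨t, ht, rfl⟩; exact hR₂ t ht)).comp
      hγ.continuous.continuousOn (Set.mapsTo_image _ _)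
  have hint : IntervalIntegrable (fun t ↦ deriv γ t • ι.comp (R (γ t)))
      MeasureTheory.volume 0 1 := by
    refine ContinuousOn.intervalIntegrable ?_
    rw [Set.uIcc_of_le zero_le_one]
    exact (hγ.continuous_deriv le_rfl).continuousOn.smul
      ((ContinuousLinearMap.compL ℂ H V H ι).continuous.comp_continuousOn hRγ)
  have hpt : Set.EqOn (fun t ↦ (deriv γ t • ι.comp (R (γ t))) (ι v))
      (fun t ↦ -(deriv γ t / (γ t - w)) • ι v) (Set.uIcc 0 1) := by
    intro t ht
    rw [Set.uIcc_of_le zero_le_one] at ht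
    have hγw := ne_of_comp_eq_id_of_eigenvector (hR₂ t ht) hv hAv
    simp only [smul_apply, ContinuousLinearMap.comp_apply,
      apply_eigenvector_of_comp_eq_id (hR₂ t ht) hAv hγw, map_smul, smul_smul]
    rw [div_eq_mul_inv, ← mul_neg, ← inv_neg, neg_sub]
  rw [rieszIntegral, smul_apply, ContinuousLinearMap.intervalIntegral_apply hint,
    intervalIntegral.integral_congr hpt, intervalIntegral.integral_smul_const,
    intervalIntegral.integral_neg, smul_smul, windingNumber, neg_mul_neg]

theorem rieszIntegral_apply_of_mem_eigenImage (hγ : ContDiff ℝ 1 γ)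
    (hR₁ : ∀ t ∈ Set.Icc (0:ℝ) 1, (A - γ t • ι).comp (R (γ t)) = .id ℂ H)
    (hR₂ : ∀ t ∈ Set.Icc (0:ℝ) 1, (R (γ t)).comp (A - γ t • ι) = .id ℂ V)
    (hwind₀ : windingNumber γ z₀ = 1) {y : H} (hy : y ∈ eigenImage A ι z₀) :
    rieszIntegral ι R γ y = y := by
  obtain ⟨v, hAv, rfl⟩ := mem_eigenImage.mp hy
  rcases eq_or_ne v 0 with rfl | hv
  · simp
  rw [rieszIntegral_apply_eigenvector hγ hR₁ hR₂ hv hAv, hwind₀, one_smul]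

theorem rieszIntegral_apply_eigenvector_mem (hγ : ContDiff ℝ 1 γ)
    (hR₁ : ∀ t ∈ Set.Icc (0:ℝ) 1, (A - γ t • ι).comp (R (γ t)) = .id ℂ H)
    (hR₂ : ∀ t ∈ Set.Icc (0:ℝ) 1, (R (γ t)).comp (A - γ t • ι) = .id ℂ V)
    (hwind₀ : windingNumber γ z₀ = 1)
    (hwind : ∀ w : ℂ, (∃ v : V, v ≠ 0 ∧ A v = w • ι v) → w ≠ z₀ → windingNumber γ w = 0)
    (hAv : A v = w • ι v) : rieszIntegral ι R γ (ι v) ∈ eigenImage A ι z₀ := by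
  rcases eq_or_ne v 0 with rfl | hv
  · simp
  rcases eq_or_ne w z₀ with rfl | hw
  · rw [rieszIntegral_apply_of_mem_eigenImage hγ hR₁ hR₂ hwind₀ (apply_mem_eigenImage hAv)]
    exact apply_mem_eigenImage hAv
  · rw [rieszIntegral_apply_eigenvector hγ hR₁ hR₂ hv hAv, hwind w ⟨v, hv, hAv⟩ hw, zero_smul]
    exact Submodule.zero_mem _

end Resolvent

theorem ContinuousLinearMap.range_le_of_map_eigenspace_le {𝕜 E F : Type*} [RCLike 𝕜]
    [NormedAddCommGroup E] [InnerProductSpace 𝕜 E] [CompleteSpace E]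
    [AddCommGroup F] [Module 𝕜 F] [TopologicalSpace F]
    {T : E →L[𝕜] E} (hT : IsCompactOperator T) (hT' : T.IsSymmetric) (P : E →L[𝕜] F)
    {K : Submodule 𝕜 F} (hK : IsClosed (K : Set F))
    (hP : ∀ μ, (eigenspace (T : End 𝕜 E) μ).map (P : E →ₗ[𝕜] F) ≤ K) :
    LinearMap.range (P : E →ₗ[𝕜] F) ≤ K := by
  have hdense : (⨆ μ, eigenspace (T : End 𝕜 E) μ).topologicalClosure = ⊤ := by
    rw [← Submodule.orthogonal_orthogonal_eq_closure,
      orthogonalComplement_iSup_eigenspaces_eq_bot hT hT', Submodule.bot_orthogonal_eq_top]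
  have hle : (⨆ μ, eigenspace (T : End 𝕜 E) μ).topologicalClosure ≤ K.comap (P : E →ₗ[𝕜] F) :=
    Submodule.topologicalClosure_minimal _ (iSup_le fun μ ↦ Submodule.map_le_iff_le_comap.mp (hP μ))
      (hK.preimage P.continuous)
  rintro _ ⟨x, rfl⟩
  exact hle (hdense ▸ Submodule.mem_top)

/-- `V` is the domain of `A` with its graph norm, `ι : V → H` the (compact) inclusion and
`R z : H → V` the resolvent `(A - z)⁻¹`. -/
theorem stmt14_general {V H : Type*}
    [NormedAddCommGroup V] [InnerProductSpace ℂ V] [CompleteSpace V]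
    [NormedAddCommGroup H] [InnerProductSpace ℂ H] [CompleteSpace H]
    (ι : V →L[ℂ] H) (hι : Function.Injective ι)
    (hcompact : IsCompactOperator ι)
    (A : V →L[ℂ] H)
    (hsa : ∀ u v : V, ⟪A u, ι v⟫_ℂ = ⟪ι u, A v⟫_ℂ)
    (γ : ℝ → ℂ) (hγ : ContDiff ℝ 1 γ) (hclosed : γ 0 = γ 1)
    (R : ℂ → H →L[ℂ] V)
    (hR₁ : ∀ t ∈ Set.Icc (0:ℝ) 1, (A - γ t • ι).comp (R (γ t)) = ContinuousLinearMap.id ℂ H)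
    (hR₂ : ∀ t ∈ Set.Icc (0:ℝ) 1, (R (γ t)).comp (A - γ t • ι) = ContinuousLinearMap.id ℂ V)
    (z₀ : ℂ) (hz₀ : ∃ v : V, v ≠ 0 ∧ A v = z₀ • ι v)
    (hwind₀ : (2 * Real.pi * Complex.I)⁻¹ *
      ∫ t in (0:ℝ)..1, deriv γ t / (γ t - z₀) = 1)
    (hwind : ∀ w : ℂ, (∃ v : V, v ≠ 0 ∧ A v = w • ι v) → w ≠ z₀ →
      (2 * Real.pi * Complex.I)⁻¹ * ∫ t in (0:ℝ)..1, deriv γ t / (γ t - w) = 0)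
    (P : H →L[ℂ] H)
    (hP : P = (-(2 * Real.pi * Complex.I)⁻¹ : ℂ) •
      ∫ t in (0:ℝ)..1, deriv γ t • (ι.comp (R (γ t)))) :
    P.comp P = P ∧
    LinearMap.range (P : H →ₗ[ℂ] H) =
      Submodule.map (ι : V →ₗ[ℂ] H)
        (LinearMap.ker ((A : V →ₗ[ℂ] H) - z₀ • (ι : V →ₗ[ℂ] H))) ∧
    Module.finrank ℂ (LinearMap.range (P : H →ₗ[ℂ] H)) =
      Module.finrank ℂ (LinearMap.ker ((A : V →ₗ[ℂ] H) - z₀ • (ι : V →ₗ[ℂ] H))) := by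
  change windingNumber γ z₀ = 1 at hwind₀
  change ∀ w, _ → _ → windingNumber γ w = 0 at hwind
  change P = rieszIntegral ι R γ at hP
  subst hP
  obtain ⟨v₀, hv₀, hAv₀⟩ := hz₀
  obtain ⟨t₀, ht₀, him⟩ := exists_im_eq_of_windingNumber_ne_zero hγ hclosed (hwind₀ ▸ one_ne_zero)
  have hz₀ := conj_eigenvalue_eq_self hsa ((map_ne_zero_iff ι hι).mpr hv₀) hAv₀
  have hγt₀ : (starRingEnd ℂ) (γ t₀) = γ t₀ :=
    Complex.conj_eq_iff_im.mpr (him.trans (Complex.conj_eq_iff_im.mp hz₀))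
  have hT : IsCompactOperator (ι.comp (R (γ t₀))) := hcompact.comp_clm (R (γ t₀))
  have := finiteDimensional_eigenImage hT (hR₂ t₀ ht₀)
    (ne_of_comp_eq_id_of_eigenvector (hR₂ t₀ ht₀) hv₀ hAv₀)
  have hrange : LinearMap.range (rieszIntegral ι R γ : H →ₗ[ℂ] H) ≤ eigenImage A ι z₀ := by
    refine ContinuousLinearMap.range_le_of_map_eigenspace_le hT
      (isSymmetric_comp_of_comp_eq_id hsa (hR₁ t₀ ht₀) hγt₀) _
      (Submodule.closed_of_finiteDimensional _) fun μ ↦ ?_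
    rintro _ ⟨x, hx, rfl⟩
    obtain ⟨c, w, v, hAv, rfl⟩ :=
      exists_eigenvector_of_comp_apply_eq_smul hι (hR₁ t₀ ht₀) (mem_eigenspace_iff.mp hx)
    simpa using Submodule.smul_mem _ c
      (rieszIntegral_apply_eigenvector_mem hγ hR₁ hR₂ hwind₀ hwind hAv)
  have hproj : LinearMap.IsProj (eigenImage A ι z₀) (rieszIntegral ι R γ : H →ₗ[ℂ] H) :=
    ⟨fun x ↦ hrange ⟨x, rfl⟩, fun _ ↦ rieszIntegral_apply_of_mem_eigenImage hγ hR₁ hR₂ hwind₀⟩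
  refine ⟨ContinuousLinearMap.ext fun x ↦ hproj.map_id _ (hproj.map_mem x), hproj.range, ?_⟩
  rw [hproj.range]
  exact (Submodule.equivMapOfInjective _ hι _).finrank_eq.symm

/-- The Riesz projection. Let `A : V → H` be a self-adjoint operator with compact
resolvent (`V` the domain with graph norm, `ι` the compact inclusion, `R z` the
resolvent `(A - z)⁻¹ : H → V`), and let `γ` be a closed `C¹` curve in the resolvent
set with winding number `1` around the eigenvalue `z₀` and `0` around all other
eigenvalues. Then `P = -(2πi)⁻¹ ∮_γ (A - z)⁻¹ dz` is a projection whose range is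
exactly the eigenspace of `A` for `z₀`; in particular its rank is the multiplicity
of `z₀`. -/
theorem stmt14 {V H : Type*}
    [NormedAddCommGroup V] [InnerProductSpace ℂ V] [CompleteSpace V]
    [NormedAddCommGroup H] [InnerProductSpace ℂ H] [CompleteSpace H]
    (ι : V →L[ℂ] H) (hι : Function.Injective ι) (hdense : DenseRange ι)
    (hcompact : IsCompactOperator ι)
    (A : V →L[ℂ] H)
    (hsa : ∀ u v : V, ⟪A u, ι v⟫_ℂ = ⟪ι u, A v⟫_ℂ)
    (γ : ℝ → ℂ) (hγ : ContDiff ℝ 1 γ) (hclosed : γ 0 = γ 1)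
    (R : ℂ → H →L[ℂ] V)
    (hR₁ : ∀ t ∈ Set.Icc (0:ℝ) 1, (A - γ t • ι).comp (R (γ t)) = ContinuousLinearMap.id ℂ H)
    (hR₂ : ∀ t ∈ Set.Icc (0:ℝ) 1, (R (γ t)).comp (A - γ t • ι) = ContinuousLinearMap.id ℂ V)
    (z₀ : ℂ) (hz₀ : ∃ v : V, v ≠ 0 ∧ A v = z₀ • ι v)
    (hwind₀ : (2 * Real.pi * Complex.I)⁻¹ *
      ∫ t in (0:ℝ)..1, deriv γ t / (γ t - z₀) = 1)
    (hwind : ∀ w : ℂ, (∃ v : V, v ≠ 0 ∧ A v = w • ι v) → w ≠ z₀ →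
      (2 * Real.pi * Complex.I)⁻¹ * ∫ t in (0:ℝ)..1, deriv γ t / (γ t - w) = 0)
    (P : H →L[ℂ] H)
    (hP : P = (-(2 * Real.pi * Complex.I)⁻¹ : ℂ) •
      ∫ t in (0:ℝ)..1, deriv γ t • (ι.comp (R (γ t)))) :
    P.comp P = P ∧
    LinearMap.range (P : H →ₗ[ℂ] H) =
      Submodule.map (ι : V →ₗ[ℂ] H)
        (LinearMap.ker ((A : V →ₗ[ℂ] H) - z₀ • (ι : V →ₗ[ℂ] H))) ∧
    Module.finrank ℂ (LinearMap.range (P : H →ₗ[ℂ] H)) =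
      Module.finrank ℂ (LinearMap.ker ((A : V →ₗ[ℂ] H) - z₀ • (ι : V →ₗ[ℂ] H))) :=
  stmt14_general ι hι hcompact A hsa γ hγ hclosed R hR₁ hR₂ z₀ hz₀ hwind₀ hwind P hP
end

section
/- Let P(t)(x) = x² − a₁(t)x + a₂(t) be a hyperbolic (both roots real) monic quadratic with real-analytic coefficients a₁, a₂ on ℝ. Then there exist real-analytic functions λ₁, λ₂ : ℝ → ℝ with P(t)(x) = (x − λ₁(t))(x − λ₂(t)) for all t. -/
/-! The discriminant `D = a₁² - 4a₂` is a nonnegative analytic function, and the roots are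
`(a₁ ± s) / 2` for any analytic `s` with `s² = D`. Near each point `D = (t - t₀)ⁿ u` with
`u t₀ ≠ 0`; nonnegativity forces `u t₀ > 0` and `n` even, so `(t - t₀)^(n/2) √u` is a local
analytic square root. Since analytic functions on a connected set have no zero divisors, two
analytic square roots there agree up to a global sign, so local roots glue along `ℝ` by a
connectedness argument. -/

open Filter Set Topology

lemma pos_and_even_of_eventually_nonneg_pow_mul {u : ℝ → ℝ} {t₀ : ℝ} {n : ℕ}
    (hu : ContinuousAt u t₀) (hu₀ : u t₀ ≠ 0) (h : ∀ᶠ t in 𝓝 t₀, 0 ≤ (t - t₀) ^ n * u t) :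
    0 < u t₀ ∧ Even n := by
  have hpos : 0 < u t₀ := by
    by_contra! hneg
    obtain ⟨t, ⟨ht, hut⟩, htt₀⟩ :=
      (((h.and (hu.eventually_lt_const (hneg.lt_of_ne hu₀))).filter_mono nhdsWithin_le_nhds).and
        (self_mem_nhdsWithin : Ioi t₀ ∈ 𝓝[>] t₀)).exists
    exact (mul_neg_of_pos_of_neg (pow_pos (sub_pos.2 htt₀) n) hut).not_ge ht
  refine ⟨hpos, Nat.not_odd_iff_even.1 fun hodd => ?_⟩
  obtain ⟨t, ⟨ht, hut⟩, htt₀⟩ := (((h.and (hu.eventually_const_lt hpos)).filter_mono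
    nhdsWithin_le_nhds).and (self_mem_nhdsWithin : Iio t₀ ∈ 𝓝[<] t₀)).exists
  exact (mul_neg_of_neg_of_pos (hodd.pow_neg (sub_neg.2 htt₀)) hut).not_ge ht

lemma exists_analyticAt_sq_eventuallyEq {d : ℝ → ℝ} {t₀ : ℝ} (hd : AnalyticAt ℝ d t₀)
    (hnonneg : ∀ᶠ t in 𝓝 t₀, 0 ≤ d t) :
    ∃ g : ℝ → ℝ, AnalyticAt ℝ g t₀ ∧ ∀ᶠ t in 𝓝 t₀, g t ^ 2 = d t := by
  cases hn : analyticOrderAt d t₀ with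
  | top =>
    refine ⟨0, analyticAt_const, ?_⟩
    filter_upwards [analyticOrderAt_eq_top.1 hn] with t ht
    simp [ht]
  | coe n =>
    obtain ⟨u, hu, hu₀, hdu⟩ := hd.analyticOrderAt_eq_natCast.1 hn
    simp only [smul_eq_mul] at hdu
    obtain ⟨hupos, k, rfl⟩ := pos_and_even_of_eventually_nonneg_pow_mul hu.continuousAt hu₀
      (by filter_upwards [hdu, hnonneg] with t h h' using h ▸ h')
    refine ⟨fun t => (t - t₀) ^ k * √(u t), ?_, ?_⟩
    · exact ((analyticAt_id.sub analyticAt_const).pow k).mul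
        ((Real.contDiffAt_sqrt hupos.ne').analyticAt.comp hu)
    · filter_upwards [hdu, hu.continuousAt.eventually_const_lt hupos] with t hdt hut
      rw [hdt, mul_pow, Real.sq_sqrt hut.le, ← pow_mul, mul_two]

lemma AnalyticOnNhd.piecewise_union {𝕜 E : Type*} [NontriviallyNormedField 𝕜]
    [NormedAddCommGroup E] [NormedSpace 𝕜 E] {f g : 𝕜 → E} {U V : Set 𝕜}
    [∀ x, Decidable (x ∈ U)] (hf : AnalyticOnNhd 𝕜 f U) (hg : AnalyticOnNhd 𝕜 g V)
    (hU : IsOpen U) (hV : IsOpen V) (hfg : EqOn f g (U ∩ V)) :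
    AnalyticOnNhd 𝕜 (U.piecewise f g) (U ∪ V) := by
  rintro x (hxU | hxV)
  · refine (hf x hxU).congr ?_
    filter_upwards [hU.mem_nhds hxU] with y hy
    simp [hy]
  · refine (hg x hxV).congr ?_
    filter_upwards [hV.mem_nhds hxV] with y hy
    by_cases hyU : y ∈ U
    · simp [hyU, hfg ⟨hyU, hy⟩]
    · simp [hyU]

def IsAnalyticSqrtOn (d s : ℝ → ℝ) (U : Set ℝ) : Prop :=
  AnalyticOnNhd ℝ s U ∧ ∀ t ∈ U, s t ^ 2 = d t

namespace IsAnalyticSqrtOn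

variable {d s g : ℝ → ℝ} {U V : Set ℝ}

lemma mono (hs : IsAnalyticSqrtOn d s U) (hVU : V ⊆ U) : IsAnalyticSqrtOn d s V :=
  ⟨hs.1.mono hVU, fun t ht => hs.2 t (hVU ht)⟩

lemma neg (hs : IsAnalyticSqrtOn d s U) : IsAnalyticSqrtOn d (-s) U :=
  ⟨hs.1.neg, fun t ht => by simpa using hs.2 t ht⟩

lemma eqOn_or_eqOn_neg (hs : IsAnalyticSqrtOn d s U) (hg : IsAnalyticSqrtOn d g U)
    (hU : IsPreconnected U) : EqOn s g U ∨ EqOn s (-g) U := by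
  have hprod : ∀ t ∈ U, (s - g) t * (s + g) t = 0 := fun t ht => by
    simp only [Pi.sub_apply, Pi.add_apply]
    linear_combination hs.2 t ht - hg.2 t ht
  refine ((hs.1.sub hg.1).eq_zero_or_eq_zero_of_mul_eq_zero (hs.1.add hg.1) hprod hU).imp
    (fun h t ht => sub_eq_zero.1 (h t ht)) (fun h t ht => ?_)
  simpa [eq_neg_iff_add_eq_zero] using h t ht

lemma eqOn_of_pos (hs : IsAnalyticSqrtOn d s U) (hg : IsAnalyticSqrtOn d g U)
    (hU : IsPreconnected U) {t : ℝ} (ht : t ∈ U) (hst : 0 < s t) (hgt : 0 < g t) :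
    EqOn s g U :=
  (hs.eqOn_or_eqOn_neg hg hU).resolve_right fun h => by
    have := h ht
    simp only [Pi.neg_apply] at this
    linarith

lemma exists_union (hs : IsAnalyticSqrtOn d s U) (hg : IsAnalyticSqrtOn d g V)
    (hU : IsOpen U) (hV : IsOpen V) (hUV : IsPreconnected (U ∩ V)) :
    ∃ r, IsAnalyticSqrtOn d r (U ∪ V) := by
  classical
  obtain ⟨g', hg', hsg'⟩ : ∃ g', IsAnalyticSqrtOn d g' V ∧ EqOn s g' (U ∩ V) :=
    ((hs.mono inter_subset_left).eqOn_or_eqOn_neg (hg.mono inter_subset_right) hUV).elim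
      (fun h => ⟨g, hg, h⟩) (fun h => ⟨-g, hg.neg, h⟩)
  refine ⟨U.piecewise s g', hs.1.piecewise_union hg'.1 hU hV hsg', ?_⟩
  rintro t (htU | htV)
  · simpa [htU] using hs.2 t htU
  · by_cases htU : t ∈ U
    · simpa [htU] using hs.2 t htU
    · simpa [htU] using hg'.2 t htV

end IsAnalyticSqrtOn

section Continuation

variable {d : ℝ → ℝ}

lemma exists_isAnalyticSqrtOn_ball {t₀ : ℝ} (hd : AnalyticAt ℝ d t₀)
    (hnonneg : ∀ᶠ t in 𝓝 t₀, 0 ≤ d t) :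
    ∃ ε > 0, ∃ g, IsAnalyticSqrtOn d g (Metric.ball t₀ ε) := by
  obtain ⟨g, hg, hg2⟩ := exists_analyticAt_sq_eventuallyEq hd hnonneg
  obtain ⟨ε, hε, hball⟩ := Metric.eventually_nhds_iff_ball.1 (hg.eventually_analyticAt.and hg2)
  exact ⟨ε, hε, g, fun t ht => (hball t ht).1, fun t ht => (hball t ht).2⟩

lemma exists_isAnalyticSqrtOn_of_nonneg (hd : AnalyticOnNhd ℝ d univ) (hnonneg : ∀ t, 0 ≤ d t)
    (t₁ t : ℝ) : ∃ U, IsOpen U ∧ IsPreconnected U ∧ t₁ ∈ U ∧ t ∈ U ∧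
      ∃ s, IsAnalyticSqrtOn d s U := by
  have hlocal (t₀ : ℝ) : ∃ ε > 0, ∃ g, IsAnalyticSqrtOn d g (Metric.ball t₀ ε) :=
    exists_isAnalyticSqrtOn_ball (hd t₀ (mem_univ _)) (.of_forall hnonneg)
  set T := {t | ∃ U, IsOpen U ∧ IsPreconnected U ∧ t₁ ∈ U ∧ t ∈ U ∧
    ∃ s, IsAnalyticSqrtOn d s U}
  suffices hT : IsClopen T by
    obtain ⟨ε, hε, g, hg⟩ := hlocal t₁
    have ht₁ : t₁ ∈ T := ⟨_, Metric.isOpen_ball, (convex_ball t₁ ε).isPreconnected,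
      Metric.mem_ball_self hε, Metric.mem_ball_self hε, g, hg⟩
    show t ∈ T
    rw [hT.eq_univ ⟨t₁, ht₁⟩]
    trivial
  refine ⟨isClosed_of_closure_subset fun t ht => ?_, isOpen_iff_forall_mem_open.2 ?_⟩
  · obtain ⟨ε, hε, g, hg⟩ := hlocal t
    obtain ⟨t', ht'B, U, hU, hUconn, ht₁U, ht'U, s, hs⟩ :=
      mem_closure_iff_nhds.1 ht _ (Metric.ball_mem_nhds t hε)
    have hBconn : IsPreconnected (Metric.ball t ε) := (convex_ball t ε).isPreconnected
    exact ⟨U ∪ Metric.ball t ε, hU.union Metric.isOpen_ball,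
      hUconn.union t' ht'U ht'B hBconn, .inl ht₁U, .inr (Metric.mem_ball_self hε),
      hs.exists_union hg hU Metric.isOpen_ball
        (hUconn.ordConnected.inter hBconn.ordConnected).isPreconnected⟩
  · rintro t ⟨U, hU, hUconn, ht₁U, htU, s, hs⟩
    exact ⟨U, fun t' ht'U => ⟨U, hU, hUconn, ht₁U, ht'U, s, hs⟩, hU, htU⟩

end Continuation

theorem exists_analyticOnNhd_sq_eq_of_nonneg {d : ℝ → ℝ} (hd : AnalyticOnNhd ℝ d univ)
    (hnonneg : ∀ t, 0 ≤ d t) : ∃ s, AnalyticOnNhd ℝ s univ ∧ ∀ t, s t ^ 2 = d t := by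
  by_cases hzero : ∃ t₁, d t₁ ≠ 0
  swap
  · exact ⟨0, analyticOnNhd_const, fun t => by simp [not_exists_not.1 hzero t]⟩
  obtain ⟨t₁, hdt₁⟩ := hzero
  -- normalizing the sign at a point where `d ≠ 0` makes local roots unique, so they patch
  have hroot (t : ℝ) : ∃ U, IsOpen U ∧ IsPreconnected U ∧ t₁ ∈ U ∧ t ∈ U ∧
      ∃ s, IsAnalyticSqrtOn d s U ∧ 0 < s t₁ := by
    obtain ⟨U, hU, hUconn, ht₁U, htU, s, hs⟩ := exists_isAnalyticSqrtOn_of_nonneg hd hnonneg t₁ t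
    have hst₁ : s t₁ ≠ 0 := fun h => hdt₁ (by rw [← hs.2 t₁ ht₁U, h, sq, zero_mul])
    rcases hst₁.lt_or_gt with hneg | hpos
    · exact ⟨U, hU, hUconn, ht₁U, htU, -s, hs.neg, neg_pos.2 hneg⟩
    · exact ⟨U, hU, hUconn, ht₁U, htU, s, hs, hpos⟩
  choose U hU hUconn ht₁U htU s hs hst₁ using hroot
  have hagree (t t' : ℝ) (ht' : t' ∈ U t) : s t' t' = s t t' := by
    have hconn : IsPreconnected (U t' ∩ U t) :=
      ((hUconn t').ordConnected.inter (hUconn t).ordConnected).isPreconnected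
    exact ((hs t').mono inter_subset_left).eqOn_of_pos ((hs t).mono inter_subset_right) hconn
      ⟨ht₁U t', ht₁U t⟩ (hst₁ t') (hst₁ t) ⟨htU t', ht'⟩
  refine ⟨fun t => s t t, fun t _ => ((hs t).1 t (htU t)).congr ?_, fun t => (hs t).2 t (htU t)⟩
  filter_upwards [(hU t).mem_nhds (htU t)] with t' ht' using (hagree t t' ht').symm

/-- A hyperbolic monic quadratic `x² - a₁(t)x + a₂(t)` with real-analytic coefficients
admits real-analytic root functions `λ₁, λ₂` on all of `ℝ`. -/
theorem stmt17 (a₁ a₂ : ℝ → ℝ)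
    (h₁ : AnalyticOnNhd ℝ a₁ Set.univ) (h₂ : AnalyticOnNhd ℝ a₂ Set.univ)
    (hhyp : ∀ t, 0 ≤ a₁ t ^ 2 - 4 * a₂ t) :
    ∃ l₁ l₂ : ℝ → ℝ, AnalyticOnNhd ℝ l₁ Set.univ ∧ AnalyticOnNhd ℝ l₂ Set.univ ∧
      ∀ t x : ℝ, x ^ 2 - a₁ t * x + a₂ t = (x - l₁ t) * (x - l₂ t) := by
  obtain ⟨s, hs, hs2⟩ := exists_analyticOnNhd_sq_eq_of_nonneg
    (d := fun t => a₁ t ^ 2 - 4 * a₂ t) ((h₁.pow 2).sub (analyticOnNhd_const.mul h₂)) hhyp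
  refine ⟨fun t => (a₁ t + s t) / 2, fun t => (a₁ t - s t) / 2,
    (h₁.add hs).div analyticOnNhd_const fun _ _ => two_ne_zero,
    (h₁.sub hs).div analyticOnNhd_const fun _ _ => two_ne_zero, fun t x => ?_⟩
  linear_combination (1 / 4 : ℝ) * hs2 t
end

section
/- A nonnegative real-analytic function f : ℝ → ℝ admits, locally around each point, a real-analytic square root: for each t₀ there is a neighborhood U and real-analytic g : U → ℝ with g² = f on U. -/
/-!
Near `t₀` a nonzero analytic germ is `(t - t₀) ^ n * g t` with `g` analytic and `g t₀ ≠ 0`.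
Nonnegativity on both sides of `t₀` forces `g t₀ > 0` (look to the right) and `n` even (then look
to the left), so `f = ((t - t₀) ^ (n / 2) * √(g t)) ^ 2`, and `√g` is analytic since `g` stays
positive near `t₀`.
-/

open Filter Topology

theorem AnalyticAt.sqrt {E : Type*} [NormedAddCommGroup E] [NormedSpace ℝ E] {f : E → ℝ} {x : E}
    (hf : AnalyticAt ℝ f x) (hx : f x ≠ 0) : AnalyticAt ℝ (fun y => √(f y)) x :=
  (hf.contDiffAt.sqrt hx).analyticAt

theorem pos_and_even_of_nonneg_of_eventuallyEq_pow_mul {f g : ℝ → ℝ} {t₀ : ℝ} {n : ℕ}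
    (hf : ∀ᶠ t in 𝓝 t₀, 0 ≤ f t) (hfg : ∀ᶠ t in 𝓝 t₀, f t = (t - t₀) ^ n * g t)
    (hg : ContinuousAt g t₀) (hg₀ : g t₀ ≠ 0) : 0 < g t₀ ∧ Even n := by
  have hpos : 0 < g t₀ := by
    by_contra! hle
    have hneg : ∀ᶠ t in 𝓝 t₀, g t < 0 := hg.eventually (eventually_lt_nhds (hle.lt_of_ne hg₀))
    have hright : ∀ᶠ t in 𝓝[>] t₀, f t < 0 := by
      filter_upwards [nhdsWithin_le_nhds (hfg.and hneg), self_mem_nhdsWithin] with t ⟨hft, hgt⟩ ht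
      exact hft ▸ mul_neg_of_pos_of_neg (pow_pos (sub_pos.mpr ht) n) hgt
    obtain ⟨t, hft_neg, hft_nonneg⟩ := (hright.and (hf.filter_mono nhdsWithin_le_nhds)).exists
    exact hft_neg.not_ge hft_nonneg
  refine ⟨hpos, Nat.not_odd_iff_even.mp fun hodd => ?_⟩
  have hgpos : ∀ᶠ t in 𝓝 t₀, 0 < g t := hg.eventually (eventually_gt_nhds hpos)
  have hleft : ∀ᶠ t in 𝓝[<] t₀, f t < 0 := by
    filter_upwards [nhdsWithin_le_nhds (hfg.and hgpos), self_mem_nhdsWithin] with t ⟨hft, hgt⟩ ht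
    exact hft ▸ mul_neg_of_neg_of_pos (hodd.pow_neg (sub_neg.mpr ht)) hgt
  obtain ⟨t, hft_neg, hft_nonneg⟩ := (hleft.and (hf.filter_mono nhdsWithin_le_nhds)).exists
  exact hft_neg.not_ge hft_nonneg

theorem AnalyticAt.exists_eventuallyEq_sq_of_nonneg {f : ℝ → ℝ} {t₀ : ℝ} (hf : AnalyticAt ℝ f t₀)
    (hnonneg : ∀ᶠ t in 𝓝 t₀, 0 ≤ f t) :
    ∃ h : ℝ → ℝ, AnalyticAt ℝ h t₀ ∧ ∀ᶠ t in 𝓝 t₀, f t = h t ^ 2 := by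
  by_cases hzero : ∀ᶠ t in 𝓝 t₀, f t = 0
  · exact ⟨0, analyticAt_const, hzero.mono fun t ht => by simp [ht]⟩
  obtain ⟨n, g, hg, hg₀, hfg⟩ := hf.exists_eventuallyEq_pow_smul_nonzero_iff.mpr hzero
  simp only [smul_eq_mul] at hfg
  obtain ⟨hgpos, k, rfl⟩ :=
    pos_and_even_of_nonneg_of_eventuallyEq_pow_mul hnonneg hfg hg.continuousAt hg₀
  refine ⟨fun t => (t - t₀) ^ k * √(g t),
    ((analyticAt_id.sub analyticAt_const).pow k).mul (hg.sqrt hgpos.ne'), ?_⟩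
  filter_upwards [hfg, hg.continuousAt.eventually (eventually_gt_nhds hgpos)] with t hft hgt
  rw [hft, mul_pow, Real.sq_sqrt hgt.le, pow_add, sq]

theorem exists_analyticOnNhd_sq_eq_of_eventuallyEq_sq {f h : ℝ → ℝ} {t₀ : ℝ}
    (hh : AnalyticAt ℝ h t₀) (hfh : ∀ᶠ t in 𝓝 t₀, f t = h t ^ 2) :
    ∃ U ∈ 𝓝 t₀, ∃ g : ℝ → ℝ, AnalyticOnNhd ℝ g U ∧ ∀ t ∈ U, g t ^ 2 = f t := by
  obtain ⟨U, hU, hUh⟩ := eventually_iff_exists_mem.mp (hh.eventually_analyticAt.and hfh)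
  exact ⟨U, hU, h, fun t ht => (hUh t ht).1, fun t ht => (hUh t ht).2.symm⟩

/-- A nonnegative real-analytic function on `ℝ` admits, locally around each point, a
real-analytic square root. -/
theorem stmt18 (f : ℝ → ℝ) (hf : AnalyticOnNhd ℝ f Set.univ) (hpos : ∀ t, 0 ≤ f t) :
    ∀ t₀ : ℝ, ∃ U ∈ nhds t₀, ∃ g : ℝ → ℝ,
      AnalyticOnNhd ℝ g U ∧ ∀ t ∈ U, g t ^ 2 = f t := by
  intro t₀
  obtain ⟨h, hh, hfh⟩ :=
    (hf t₀ (Set.mem_univ t₀)).exists_eventuallyEq_sq_of_nonneg (Eventually.of_forall hpos)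
  exact exists_analyticOnNhd_sq_eq_of_eventuallyEq_sq hh hfh
end
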